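/- Let Z_1, ..., Z_N be negatively associated real-valued random variables with |Z_i| ≤ c almost surely, E[Z_i] = 0, and E[Z_i^2] ≤ σ_i^2 for each i. Then for all t > 0, P(∑_{i=1}^N Z_i ≥ t) ≤ exp(-t^2 / ((2/3) c t + 2 ∑_{i=1}^N σ_i^2)). -/

import Mathlib

open MeasureTheory ProbabilityTheory

/-- Negative association of a finite family of real random variables. -/
def NegAssoc {Ω : Type*} [MeasurableSpace Ω] (μ : Measure Ω) {N : ℕ}
    (Z : Fin N → Ω → ℝ) : Prop :=
  ∀ (A B : Finset (Fin N)), Disjoint A B →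
    ∀ f g : (Fin N → ℝ) → ℝ, Monotone f → Monotone g →
      (∀ x y : Fin N → ℝ, (∀ i ∈ A, x i = y i) → f x = f y) →
      (∀ x y : Fin N → ℝ, (∀ i ∈ B, x i = y i) → g x = g y) →
      Measurable f → Measurable g →
      Integrable (fun ω => f (fun i => Z i ω)) μ →
      Integrable (fun ω => g (fun i => Z i ω)) μ →
      Integrable (fun ω => f (fun i => Z i ω) * g (fun i => Z i ω)) μ →
      ∫ ω, f (fun i => Z i ω) * g (fun i => Z i ω) ∂μ ≤
        (∫ ω, f (fun i => Z i ω) ∂μ) * ∫ ω, g (fun i => Z i ω) ∂μ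


open scoped Nat

lemma two_mul_three_pow_le (n : ℕ) : 2 * 3 ^ n ≤ (n + 2)! := by
  induction n with
  | zero => simp [Nat.factorial]
  | succ n ih =>
    calc 2 * 3 ^ (n + 1) = 3 * (2 * 3 ^ n) := by ring
    _ ≤ 3 * (n + 2)! := Nat.mul_le_mul_left _ ih
    _ ≤ (n + 3) * (n + 2)! := Nat.mul_le_mul_right _ (by omega)
    _ = (n + 3)! := rfl

set_option maxHeartbeats 1000000 in
lemma exp_le_of_nonneg' {y : ℝ} (hy : 0 ≤ y) (hy3 : y < 3) :
    Real.exp y ≤ 1 + y + y ^ 2 / (2 * (1 - y / 3)) := by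
  have hsum : Summable (fun n : ℕ => y ^ n / n !) := Real.summable_pow_div_factorial y
  have hsum1 : Summable (fun n : ℕ => y ^ (n + 1) / (n + 1)!) :=
    (summable_nat_add_iff 1).2 hsum
  have hsum2 : Summable (fun n : ℕ => y ^ (n + 2) / (n + 2)!) :=
    (summable_nat_add_iff 2).2 hsum
  have hexp : Real.exp y = 1 + y + ∑' n : ℕ, y ^ (n + 2) / (n + 2)! := by
    rw [Real.exp_eq_exp_ℝ, NormedSpace.exp_eq_tsum_div]
    show (∑' n : ℕ, y ^ n / n !) = _
    rw [Summable.tsum_eq_zero_add hsum, Summable.tsum_eq_zero_add hsum1]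
    simp [Nat.factorial]
    ring
  have hq : y / 3 < 1 := by linarith
  have hq0 : 0 ≤ y / 3 := by positivity
  have hgeom : Summable (fun n : ℕ => y ^ 2 / 2 * (y / 3) ^ n) :=
    (summable_geometric_of_lt_one hq0 hq).mul_left _
  have hle : ∑' n : ℕ, y ^ (n + 2) / (n + 2)! ≤ ∑' n : ℕ, y ^ 2 / 2 * (y / 3) ^ n := by
    refine Summable.tsum_le_tsum (fun n => ?_) hsum2 hgeom
    have hf : (2 * 3 ^ n : ℝ) ≤ ((n + 2)! : ℝ) := by exact_mod_cast two_mul_three_pow_le n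
    calc y ^ (n + 2) / ((n + 2)! : ℝ) ≤ y ^ (n + 2) / (2 * 3 ^ n) :=
          div_le_div_of_nonneg_left (by positivity) (by positivity) hf
    _ = y ^ 2 / 2 * (y / 3) ^ n := by rw [div_pow]; ring
  have hgs : ∑' n : ℕ, y ^ 2 / 2 * (y / 3) ^ n = y ^ 2 / 2 * (1 - y / 3)⁻¹ := by
    rw [tsum_mul_left, tsum_geometric_of_lt_one hq0 hq]
  rw [hexp]
  have hne : (1 : ℝ) - y / 3 > 0 := by linarith
  have : y ^ 2 / 2 * (1 - y / 3)⁻¹ = y ^ 2 / (2 * (1 - y / 3)) := by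
    field_simp
  linarith [hle.trans_eq (hgs.trans this)]

lemma exp_le_quad {y : ℝ} (hy : y ≤ 0) : Real.exp y ≤ 1 + y + y ^ 2 / 2 := by
  have hd : ∀ x : ℝ, HasDerivAt (fun x => 1 + x + x ^ 2 / 2 - Real.exp x)
      (1 + x - Real.exp x) x := by
    intro x
    have h1 : HasDerivAt (fun x : ℝ => 1 + x + x ^ 2 / 2) (0 + 1 + 2 * x ^ 1 / 2) x :=
      (((hasDerivAt_const x (1:ℝ)).add (hasDerivAt_id x)).add ((hasDerivAt_pow 2 x).div_const 2))
    have := h1.sub (Real.hasDerivAt_exp x)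
    exact this.congr_deriv (by ring)
  have h : AntitoneOn (fun x => 1 + x + x ^ 2 / 2 - Real.exp x) (Set.Iic 0) := by
    apply antitoneOn_of_deriv_nonpos (convex_Iic 0)
    · exact (Continuous.continuousOn (by continuity))
    · intro x hx
      exact (hd x).differentiableAt.differentiableWithinAt
    · intro x hx
      rw [(hd x).deriv]
      have := Real.add_one_le_exp x
      linarith
  have h0 : (0:ℝ) ∈ Set.Iic (0:ℝ) := Set.self_mem_Iic
  have := h (Set.mem_Iic.2 hy) h0 hy
  simp only [Real.exp_zero] at this
  nlinarith [this]

lemma exp_le_key {y u : ℝ} (h1 : |y| ≤ u) (h2 : u < 3) :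
    Real.exp y ≤ 1 + y + y ^ 2 / (2 * (1 - u / 3)) := by
  have hu0 : 0 ≤ u := (abs_nonneg y).trans h1
  have hden : 0 < 1 - u / 3 := by linarith
  rcases le_or_gt y 0 with hy | hy
  · have hq := exp_le_quad hy
    have h2' : y ^ 2 / 2 ≤ y ^ 2 / (2 * (1 - u / 3)) :=
      div_le_div_of_nonneg_left (sq_nonneg y) (by linarith) (by linarith)
    linarith
  · have hyu : y ≤ u := (le_abs_self y).trans h1
    have h3 : y < 3 := lt_of_le_of_lt hyu h2
    have := exp_le_of_nonneg' hy.le h3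
    have h2' : y ^ 2 / (2 * (1 - y / 3)) ≤ y ^ 2 / (2 * (1 - u / 3)) :=
      div_le_div_of_nonneg_left (sq_nonneg y) (by linarith) (by linarith)
    linarith

lemma integrable_of_ae_bound {Ω : Type*} [MeasurableSpace Ω] {μ : Measure Ω} [IsFiniteMeasure μ]
    {f : Ω → ℝ} (hf : Measurable f) {C : ℝ} (h : ∀ᵐ ω ∂μ, |f ω| ≤ C) : Integrable f μ :=
  (integrable_const C).mono' hf.aestronglyMeasurable
    (h.mono fun ω hω => by simpa [Real.norm_eq_abs] using hω)

lemma mgf_single {Ω : Type*} [MeasurableSpace Ω] (μ : Measure Ω) [IsProbabilityMeasure μ]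
    (X : Ω → ℝ) (hX : Measurable X) (c s l : ℝ) (hl : 0 ≤ l) (hlc : l * c < 3)
    (hb : ∀ᵐ ω ∂μ, |X ω| ≤ c) (hm : ∫ ω, X ω ∂μ = 0) (hv : ∫ ω, X ω ^ 2 ∂μ ≤ s) :
    ∫ ω, Real.exp (l * X ω) ∂μ ≤ Real.exp (l ^ 2 / (2 * (1 - l * c / 3)) * s) := by
  have hden : 0 < 1 - l * c / 3 := by linarith
  set K : ℝ := l ^ 2 / (2 * (1 - l * c / 3)) with hK
  have hK0 : 0 ≤ K := by positivity
  have hXi : Integrable X μ := integrable_of_ae_bound hX hb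
  have hX2 : Integrable (fun ω => X ω ^ 2) μ := by
    refine integrable_of_ae_bound (C := c ^ 2) (hX.pow_const 2) (hb.mono fun ω hω => ?_)
    calc |X ω ^ 2| = |X ω| ^ 2 := by rw [abs_pow]
    _ ≤ c ^ 2 := pow_le_pow_left₀ (abs_nonneg _) hω 2
  have hExp : Integrable (fun ω => Real.exp (l * X ω)) μ := by
    refine integrable_of_ae_bound (C := Real.exp (l * c)) (by measurability) (hb.mono fun ω hω => ?_)
    rw [abs_of_pos (Real.exp_pos _), Real.exp_le_exp]
    calc l * X ω ≤ l * |X ω| := by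
          exact mul_le_mul_of_nonneg_left (le_abs_self _) hl
    _ ≤ l * c := mul_le_mul_of_nonneg_left hω hl
  have hpt : ∀ᵐ ω ∂μ, Real.exp (l * X ω) ≤ 1 + l * X ω + K * X ω ^ 2 := by
    filter_upwards [hb] with ω hω
    have key := exp_le_key (y := l * X ω) (u := l * c)
      (by rw [abs_mul, abs_of_nonneg hl]; exact mul_le_mul_of_nonneg_left hω hl) hlc
    have : (l * X ω) ^ 2 / (2 * (1 - l * c / 3)) = K * X ω ^ 2 := by
      rw [hK]; ring
    linarith [key, this ▸ key]
  have hconst : Integrable (fun _ : Ω => (1:ℝ)) μ := integrable_const 1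
  have hlX : Integrable (fun ω => l * X ω) μ := hXi.const_mul l
  have hKX2 : Integrable (fun ω => K * X ω ^ 2) μ := hX2.const_mul K
  have hf1 : Integrable (fun ω => 1 + l * X ω) μ := hconst.add hlX
  have hg : Integrable (fun ω => 1 + l * X ω + K * X ω ^ 2) μ := hf1.add hKX2
  have hint : ∫ ω, Real.exp (l * X ω) ∂μ ≤ ∫ ω, (1 + l * X ω + K * X ω ^ 2) ∂μ :=
    integral_mono_ae hExp hg hpt
  have hval : ∫ ω, (1 + l * X ω + K * X ω ^ 2) ∂μ = 1 + K * ∫ ω, X ω ^ 2 ∂μ := by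
    rw [integral_add hf1 hKX2, integral_add hconst hlX,
      integral_const, integral_const_mul, integral_const_mul, hm]
    simp
  have : ∫ ω, Real.exp (l * X ω) ∂μ ≤ 1 + K * s := by
    have := mul_le_mul_of_nonneg_left hv hK0
    linarith [hint.trans_eq hval]
  calc ∫ ω, Real.exp (l * X ω) ∂μ ≤ 1 + K * s := this
  _ ≤ Real.exp (K * s) := by linarith [Real.add_one_le_exp (K * s)]

lemma integrable_exp_sum {Ω : Type*} [MeasurableSpace Ω] {μ : Measure Ω} [IsProbabilityMeasure μ]
    {N : ℕ} {Z : Fin N → Ω → ℝ} (hmeas : ∀ i, Measurable (Z i))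
    {c : ℝ} (hbdd : ∀ i, ∀ᵐ ω ∂μ, |Z i ω| ≤ c) {l : ℝ} (hl : 0 ≤ l) (A : Finset (Fin N)) :
    Integrable (fun ω => Real.exp (l * ∑ i ∈ A, Z i ω)) μ := by
  have haeb : ∀ᵐ ω ∂μ, ∀ i, |Z i ω| ≤ c := (ae_all_iff).2 hbdd
  refine integrable_of_ae_bound (C := Real.exp (l * (A.card * c)))
    (by measurability) (haeb.mono fun ω hω => ?_)
  rw [abs_of_pos (Real.exp_pos _), Real.exp_le_exp]
  refine mul_le_mul_of_nonneg_left ?_ hl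
  calc ∑ i ∈ A, Z i ω ≤ ∑ i ∈ A, c := Finset.sum_le_sum fun i _ => (abs_le.1 (hω i)).2
  _ = A.card * c := by rw [Finset.sum_const, nsmul_eq_mul]

lemma exp_sum_le_prod {Ω : Type*} [MeasurableSpace Ω] {μ : Measure Ω} [IsProbabilityMeasure μ]
    {N : ℕ} {Z : Fin N → Ω → ℝ} (hmeas : ∀ i, Measurable (Z i)) (hNA : NegAssoc μ Z)
    {c : ℝ} (hbdd : ∀ i, ∀ᵐ ω ∂μ, |Z i ω| ≤ c) {l : ℝ} (hl : 0 ≤ l) (s : Finset (Fin N)) :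
    ∫ ω, Real.exp (l * ∑ i ∈ s, Z i ω) ∂μ ≤ ∏ i ∈ s, ∫ ω, Real.exp (l * Z i ω) ∂μ := by
  induction s using Finset.induction_on with
  | empty => simp
  | @insert a s ha ih =>
    set f : (Fin N → ℝ) → ℝ := fun x => Real.exp (l * ∑ i ∈ s, x i) with hf
    set g : (Fin N → ℝ) → ℝ := fun x => Real.exp (l * x a) with hg
    have hfg : ∀ ω, f (fun i => Z i ω) * g (fun i => Z i ω)
        = Real.exp (l * ∑ i ∈ insert a s, Z i ω) := by
      intro ω
      rw [hf, hg, ← Real.exp_add, Finset.sum_insert ha]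
      ring_nf
    have hfmono : Monotone f := by
      intro x y hxy
      exact Real.exp_le_exp.2 (mul_le_mul_of_nonneg_left
        (Finset.sum_le_sum fun i _ => hxy i) hl)
    have hgmono : Monotone g := by
      intro x y hxy
      exact Real.exp_le_exp.2 (mul_le_mul_of_nonneg_left (hxy a) hl)
    have hfdep : ∀ x y : Fin N → ℝ, (∀ i ∈ s, x i = y i) → f x = f y := by
      intro x y hxy
      rw [hf]; simp only; rw [Finset.sum_congr rfl hxy]
    have hgdep : ∀ x y : Fin N → ℝ, (∀ i ∈ ({a} : Finset (Fin N)), x i = y i) → g x = g y := by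
      intro x y hxy
      rw [hg]; simp only [hxy a (Finset.mem_singleton_self a)]
    have hfm : Measurable f :=
      (Real.measurable_exp.comp ((Finset.measurable_sum s fun i _ =>
        measurable_pi_apply i).const_mul l))
    have hgm : Measurable g :=
      (Real.measurable_exp.comp ((measurable_pi_apply (X := fun _ : Fin N => ℝ) a).const_mul l))
    have hif : Integrable (fun ω => f (fun i => Z i ω)) μ :=
      integrable_exp_sum hmeas hbdd hl s
    have hig : Integrable (fun ω => g (fun i => Z i ω)) μ := by
      have := integrable_exp_sum hmeas hbdd hl {a}
      simpa using this
    have hifg : Integrable (fun ω => f (fun i => Z i ω) * g (fun i => Z i ω)) μ := by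
      simp only [hfg]
      exact integrable_exp_sum hmeas hbdd hl (insert a s)
    have hNAapp := hNA s {a} (Finset.disjoint_singleton_right.2 ha) f g hfmono hgmono
      hfdep hgdep hfm hgm hif hig hifg
    have hgnn : 0 ≤ ∫ ω, g (fun i => Z i ω) ∂μ :=
      integral_nonneg fun ω => (Real.exp_pos _).le
    calc ∫ ω, Real.exp (l * ∑ i ∈ insert a s, Z i ω) ∂μ
        = ∫ ω, f (fun i => Z i ω) * g (fun i => Z i ω) ∂μ := by
          simp only [hfg]
    _ ≤ (∫ ω, f (fun i => Z i ω) ∂μ) * ∫ ω, g (fun i => Z i ω) ∂μ := hNAapp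
    _ ≤ (∏ i ∈ s, ∫ ω, Real.exp (l * Z i ω) ∂μ) * ∫ ω, Real.exp (l * Z a ω) ∂μ := by
          exact mul_le_mul_of_nonneg_right ih hgnn
    _ = ∏ i ∈ insert a s, ∫ ω, Real.exp (l * Z i ω) ∂μ := by
          rw [Finset.prod_insert ha, mul_comm]

/-- Bernstein inequality for sums of negatively associated, bounded, centered
random variables. -/
theorem bernstein_of_negAssoc
    {Ω : Type*} [MeasurableSpace Ω] (μ : Measure Ω) [IsProbabilityMeasure μ]
    {N : ℕ} (Z : Fin N → Ω → ℝ) (hmeas : ∀ i, Measurable (Z i))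
    (hNA : NegAssoc μ Z) (c : ℝ) (σ : Fin N → ℝ)
    (hbdd : ∀ i, ∀ᵐ ω ∂μ, |Z i ω| ≤ c)
    (hmean : ∀ i, ∫ ω, Z i ω ∂μ = 0)
    (hvar : ∀ i, ∫ ω, (Z i ω) ^ 2 ∂μ ≤ (σ i) ^ 2)
    (t : ℝ) (ht : 0 < t) :
    (μ {ω | t ≤ ∑ i, Z i ω}).toReal ≤
      Real.exp (-(t ^ 2) / ((2 / 3) * c * t + 2 * ∑ i, (σ i) ^ 2)) := by
  set V : ℝ := ∑ i, (σ i) ^ 2 with hVdef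
  set D : ℝ := (2 / 3) * c * t + 2 * V with hDdef
  have hV0 : 0 ≤ V := Finset.sum_nonneg fun i _ => sq_nonneg _
  have hprob1 : (μ {ω | t ≤ ∑ i, Z i ω}).toReal ≤ 1 := by
    calc (μ {ω | t ≤ ∑ i, Z i ω}).toReal ≤ (μ Set.univ).toReal :=
      ENNReal.toReal_mono (measure_ne_top _ _) (measure_mono (Set.subset_univ _))
    _ = 1 := by simp
  rcases le_or_gt D 0 with hD | hD
  · -- trivial case: RHS ≥ 1
    have hexp1 : (1 : ℝ) ≤ Real.exp (-(t ^ 2) / D) := by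
      apply Real.one_le_exp
      rcases hD.eq_or_lt with h0 | hneg
      · simp [h0]
      · exact div_nonneg_iff.2 (Or.inr ⟨by nlinarith, hD⟩)
    exact hprob1.trans hexp1
  rcases eq_or_lt_of_le hV0 with hVz | hV
  · -- V = 0 : each Z i is a.e. zero
    have hs0 : ∀ i : Fin N, (σ i) ^ 2 = 0 := by
      intro i
      have := Finset.sum_eq_zero_iff_of_nonneg (fun i _ => sq_nonneg (σ i)) |>.1 hVz.symm
      exact this i (Finset.mem_univ i)
    have hz : ∀ i : Fin N, ∀ᵐ ω ∂μ, Z i ω = 0 := by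
      intro i
      have hX2 : Integrable (fun ω => Z i ω ^ 2) μ := by
        refine integrable_of_ae_bound (C := c ^ 2) ((hmeas i).pow_const 2)
          ((hbdd i).mono fun ω hω => ?_)
        calc |Z i ω ^ 2| = |Z i ω| ^ 2 := by rw [abs_pow]
        _ ≤ c ^ 2 := pow_le_pow_left₀ (abs_nonneg _) hω 2
      have hle : ∫ ω, Z i ω ^ 2 ∂μ ≤ 0 := (hvar i).trans_eq (hs0 i)
      have hge : 0 ≤ ∫ ω, Z i ω ^ 2 ∂μ := integral_nonneg fun ω => sq_nonneg _
      have h0 : ∫ ω, Z i ω ^ 2 ∂μ = 0 := le_antisymm hle hge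
      have := (integral_eq_zero_iff_of_nonneg (fun ω => sq_nonneg (Z i ω)) hX2).1 h0
      filter_upwards [this] with ω hω
      exact pow_eq_zero_iff (n := 2) (by norm_num) |>.1 hω
    have hallz : ∀ᵐ ω ∂μ, ∀ i, Z i ω = 0 := (ae_all_iff).2 hz
    have hnull : μ {ω | t ≤ ∑ i, Z i ω} = 0 := by
      refine measure_eq_zero_iff_ae_notMem.2 ?_
      filter_upwards [hallz] with ω hω
      simp only [Set.mem_setOf_eq, not_le, Finset.sum_eq_zero fun i _ => hω i]
      exact ht
    rw [hnull]
    simpa using (Real.exp_pos _).le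
  · -- main case: V > 0
    have hc0 : 0 ≤ c := by
      obtain ⟨i0, _⟩ : (Finset.univ : Finset (Fin N)).Nonempty := by
        by_contra h
        rw [Finset.not_nonempty_iff_eq_empty] at h
        rw [hVdef, h, Finset.sum_empty] at hV
        exact absurd hV (lt_irrefl 0)
      haveI : (ae μ).NeBot := IsProbabilityMeasure.ae_neBot
      obtain ⟨ω, hω⟩ := (hbdd i0).exists
      exact (abs_nonneg _).trans hω
    have hM : 0 < V + c * t / 3 := by positivity
    set l : ℝ := t / (V + c * t / 3) with hldef
    have hl : 0 < l := div_pos ht hM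
    have hlc : l * c < 3 := by
      rw [hldef, div_mul_eq_mul_div, div_lt_iff₀ hM]
      nlinarith
    have hden : 0 < 1 - l * c / 3 := by linarith
    have hint : Integrable (fun ω => Real.exp (l * ∑ i, Z i ω)) μ :=
      integrable_exp_sum hmeas hbdd hl.le Finset.univ
    have hch := measure_ge_le_exp_mul_mgf (X := fun ω => ∑ i, Z i ω) (μ := μ) (t := l)
      t hl.le hint
    have hmgf : mgf (fun ω => ∑ i, Z i ω) μ l = ∫ ω, Real.exp (l * ∑ i, Z i ω) ∂μ := rfl
    have hprod := exp_sum_le_prod hmeas hNA hbdd hl.le Finset.univ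
    have hsingle : ∀ i : Fin N, ∫ ω, Real.exp (l * Z i ω) ∂μ ≤
        Real.exp (l ^ 2 / (2 * (1 - l * c / 3)) * (σ i) ^ 2) := fun i =>
      mgf_single μ (Z i) (hmeas i) c ((σ i) ^ 2) l hl.le hlc (hbdd i) (hmean i) (hvar i)
    have hprod2 : (∏ i, ∫ ω, Real.exp (l * Z i ω) ∂μ) ≤
        Real.exp (l ^ 2 / (2 * (1 - l * c / 3)) * V) := by
      calc (∏ i, ∫ ω, Real.exp (l * Z i ω) ∂μ)
          ≤ ∏ i, Real.exp (l ^ 2 / (2 * (1 - l * c / 3)) * (σ i) ^ 2) :=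
            Finset.prod_le_prod (fun i _ => integral_nonneg fun ω => (Real.exp_pos _).le)
              (fun i _ => hsingle i)
      _ = Real.exp (∑ i, l ^ 2 / (2 * (1 - l * c / 3)) * (σ i) ^ 2) :=
            (Real.exp_sum _ _).symm
      _ = Real.exp (l ^ 2 / (2 * (1 - l * c / 3)) * V) := by
            rw [← Finset.mul_sum]
    have hfinal : Real.exp (-l * t) * Real.exp (l ^ 2 / (2 * (1 - l * c / 3)) * V)
        = Real.exp (-(t ^ 2) / D) := by
      rw [← Real.exp_add]
      congr 1
      have h1 : 1 - l * c / 3 = V / (V + c * t / 3) := by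
        rw [hldef]
        field_simp
        ring
      rw [h1, hldef, hDdef]
      field_simp
      ring
    calc (μ {ω | t ≤ ∑ i, Z i ω}).toReal
        ≤ Real.exp (-l * t) * mgf (fun ω => ∑ i, Z i ω) μ l := hch
    _ ≤ Real.exp (-l * t) * Real.exp (l ^ 2 / (2 * (1 - l * c / 3)) * V) := by
        rw [hmgf]
        exact mul_le_mul_of_nonneg_left (hprod.trans hprod2) (Real.exp_pos _).le
    _ = Real.exp (-(t ^ 2) / D) := hfinal
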